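/- arXiv:1805.11536 — 3 statements merged into one kernel-verified Lean document; each statement's English description precedes it below -/
import Mathlib

section
/- Let R be a commutative ring, n an integer with n < −1, and (X, δ) a (non-counital) comonoid in chain complexes of R-modules, with comultiplication δ : X → X ⊗ X. Define δ_n : L_nX → L_nX ⊗ L_nX on homogeneous elements by δ_n(x) = (q_n ⊗ q_n)(δ x) if |x| ≤ n and δ_n(x) = 0 if |x| ≥ n+1, where q_n : X → L_nX is the truncation quotient map. Then δ_n is a well-defined chain map, the square q_n-then-δ_n equals δ-then-(q_n ⊗ q_n), and δ_n is coassociative, i.e., (δ_n ⊗ id)δ_n = (id ⊗ δ_n)δ_n. -/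
/-!
In total degrees `≤ n` the truncation map `q` is invertible, so there `δ_n` must be
`q⁻¹ ≫ δ ≫ (q ⊗ q)`; in total degrees `≥ n + 1` the target `L_i ⊗ L_j` vanishes (as `n + 1 < 0`,
one of `i`, `j` exceeds `n + 1`), so there `δ_n = 0` is forced as well. Thus
`q ≫ δ_n = δ ≫ (q ⊗ q)` in every bidegree, and since `q` is degreewise epi, the chain-map and
coassociativity identities for `δ_n` follow from those for `δ` after precomposing with `q`.
-/

open CategoryTheory Limits MonoidalCategory

namespace ChainComplex

variable {C : Type*} [Category C] [MonoidalCategory C]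

section Preadditive

variable [Preadditive C]

def IsChainComul (K : ChainComplex C ℤ)
    (δ : ∀ i j : ℤ, K.X (i + j) ⟶ K.X i ⊗ K.X j) : Prop :=
  ∀ i j : ℤ,
    K.d (i + 1 + j) (i + j) ≫ δ i j =
      (K.XIsoOfEq (show i + 1 + j = (i + 1) + j by ring)).hom ≫ δ (i + 1) j ≫
          (K.d (i + 1) i ▷ K.X j) +
        (((-1 : ℤˣ) ^ i : ℤˣ) : ℤ) •
          ((K.XIsoOfEq (show i + 1 + j = i + (j + 1) by ring)).hom ≫ δ i (j + 1) ≫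
            (K.X i ◁ K.d (j + 1) j))

theorem IsChainComul.of_epi {X L : ChainComplex C ℤ} (q : X ⟶ L)
    {δ : ∀ i j : ℤ, X.X (i + j) ⟶ X.X i ⊗ X.X j} {δL : ∀ i j : ℤ, L.X (i + j) ⟶ L.X i ⊗ L.X j}
    (hq : ∀ i, Epi (q.f i)) (hsq : ∀ i j, q.f (i + j) ≫ δL i j = δ i j ≫ (q.f i ⊗ₘ q.f j))
    (h : IsChainComul X δ) : IsChainComul L δL := by
  intro i j
  rw [← cancel_epi (q.f (i + 1 + j)), q.comm_assoc, hsq, reassoc_of% (h i j),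
    Preadditive.comp_add, Preadditive.comp_zsmul,
    HomologicalComplex.XIsoOfEq_hom_naturality_assoc,
    HomologicalComplex.XIsoOfEq_hom_naturality_assoc,
    reassoc_of% hsq, reassoc_of% hsq, tensorHom_comp_whiskerRight, tensorHom_comp_whiskerLeft,
    q.comm, q.comm, ← whiskerRight_comp_tensorHom, ← whiskerLeft_comp_tensorHom]
  simp only [Preadditive.add_comp, Preadditive.zsmul_comp, Category.assoc]

theorem isZero_X_tensor_X [MonoidalPreadditive C] {K : ChainComplex C ℤ} {m : ℤ}
    (hm : m < 0) (hK : ∀ i > m, IsZero (K.X i)) {i j : ℤ} (hij : m ≤ i + j) :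
    IsZero (K.X i ⊗ K.X j) := by
  rcases le_or_gt i m with hi | hi
  · exact Functor.map_isZero (tensorLeft (K.X i)) (hK j (by omega))
  · exact Functor.map_isZero (tensorRight (K.X j)) (hK i hi)

end Preadditive

section ZeroMorphisms

variable [HasZeroMorphisms C]

def IsCoassocComul (K : ChainComplex C ℤ)
    (δ : ∀ i j : ℤ, K.X (i + j) ⟶ K.X i ⊗ K.X j) : Prop :=
  ∀ i j k : ℤ,
    (K.XIsoOfEq (show i + j + k = (i + j) + k by ring)).hom ≫ δ (i + j) k ≫
        (δ i j ▷ K.X k) =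
      (K.XIsoOfEq (show i + j + k = i + (j + k) by ring)).hom ≫ δ i (j + k) ≫
        (K.X i ◁ δ j k) ≫ (α_ (K.X i) (K.X j) (K.X k)).inv

variable {X L : ChainComplex C ℤ} (q : X ⟶ L)
  {δ : ∀ i j : ℤ, X.X (i + j) ⟶ X.X i ⊗ X.X j} {δL : ∀ i j : ℤ, L.X (i + j) ⟶ L.X i ⊗ L.X j}

theorem IsCoassocComul.of_epi (hq : ∀ i, Epi (q.f i))
    (hsq : ∀ i j, q.f (i + j) ≫ δL i j = δ i j ≫ (q.f i ⊗ₘ q.f j))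
    (h : IsCoassocComul X δ) : IsCoassocComul L δL := by
  intro i j k
  rw [← cancel_epi (q.f (i + j + k)), HomologicalComplex.XIsoOfEq_hom_naturality_assoc,
    HomologicalComplex.XIsoOfEq_hom_naturality_assoc, reassoc_of% hsq, reassoc_of% hsq,
    tensorHom_comp_whiskerRight, tensorHom_comp_whiskerLeft_assoc, hsq, hsq,
    ← whiskerRight_comp_tensorHom, ← whiskerLeft_comp_tensorHom_assoc,
    associator_inv_naturality, reassoc_of% (h i j k)]

variable (n : ℤ) (hiso : ∀ i ≤ n, IsIso (q.f i)) (δ)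

noncomputable def truncComul (i j : ℤ) : L.X (i + j) ⟶ L.X i ⊗ L.X j :=
  if h : i + j ≤ n then
    haveI := hiso _ h
    inv (q.f (i + j)) ≫ δ i j ≫ (q.f i ⊗ₘ q.f j)
  else 0

theorem truncComul_eq_zero {i j : ℤ} (h : n < i + j) : truncComul q δ n hiso i j = 0 :=
  dif_neg (by omega)

theorem f_comp_truncComul (hL : ∀ i j, n < i + j → IsZero (L.X i ⊗ L.X j)) (i j : ℤ) :
    q.f (i + j) ≫ truncComul q δ n hiso i j = δ i j ≫ (q.f i ⊗ₘ q.f j) := by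
  by_cases h : i + j ≤ n
  · have := hiso _ h
    simp only [truncComul, dif_pos h, IsIso.hom_inv_id_assoc]
  · exact (hL i j (by omega)).eq_of_tgt _ _

end ZeroMorphisms

end ChainComplex

theorem truncation_of_chain_comonoid
    (R : Type) [CommRing R]
    (n : ℤ) (hn : n < -1)
    (X L : ChainComplex (ModuleCat R) ℤ)
    -- the truncation map `q_n : X ⟶ L_n X`
    (q : X ⟶ L)
    (hsurj : ∀ i : ℤ, Function.Surjective (q.f i))
    (hbij : ∀ i ≤ n, Function.Bijective (q.f i))
    (hzero : ∀ i > n + 1, IsZero (L.X i))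
    -- the components of the comultiplication `δ : X ⟶ X ⊗ X`
    (δ : ∀ i j : ℤ, X.X (i + j) ⟶ X.X i ⊗ X.X j)
    -- `δ` is a chain map (Koszul sign rule)
    (hδchain : ∀ i j : ℤ,
      X.d (i + 1 + j) (i + j) ≫ δ i j =
        (X.XIsoOfEq (show i + 1 + j = (i + 1) + j by ring)).hom ≫ δ (i + 1) j ≫
            (X.d (i + 1) i ▷ X.X j) +
          (((-1 : ℤˣ) ^ i : ℤˣ) : ℤ) •
            ((X.XIsoOfEq (show i + 1 + j = i + (j + 1) by ring)).hom ≫ δ i (j + 1) ≫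
              (X.X i ◁ X.d (j + 1) j)))
    -- `δ` is coassociative
    (hδcoassoc : ∀ i j k : ℤ,
      (X.XIsoOfEq (show i + j + k = (i + j) + k by ring)).hom ≫ δ (i + j) k ≫
          (δ i j ▷ X.X k) =
        (X.XIsoOfEq (show i + j + k = i + (j + k) by ring)).hom ≫ δ i (j + k) ≫
          (X.X i ◁ δ j k) ≫ (α_ (X.X i) (X.X j) (X.X k)).inv) :
    -- Conclusion: the truncated comultiplication `δ_n` exists, is determined by the
    -- formula of the paper, is a chain map, and is coassociative.
    ∃ δn : ∀ i j : ℤ, L.X (i + j) ⟶ L.X i ⊗ L.X j,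
      -- the commuting square `q ≫ δ_n = δ ≫ (q ⊗ q)`
      (∀ i j : ℤ, q.f (i + j) ≫ δn i j = δ i j ≫ (q.f i ⊗ₘ q.f j)) ∧
      -- `δ_n = 0` in total degrees `≥ n + 1`
      (∀ i j : ℤ, n + 1 ≤ i + j → δn i j = 0) ∧
      -- `δ_n` is a chain map
      (∀ i j : ℤ,
        L.d (i + 1 + j) (i + j) ≫ δn i j =
          (L.XIsoOfEq (show i + 1 + j = (i + 1) + j by ring)).hom ≫ δn (i + 1) j ≫
              (L.d (i + 1) i ▷ L.X j) +
            (((-1 : ℤˣ) ^ i : ℤˣ) : ℤ) •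
              ((L.XIsoOfEq (show i + 1 + j = i + (j + 1) by ring)).hom ≫ δn i (j + 1) ≫
                (L.X i ◁ L.d (j + 1) j))) ∧
      -- `δ_n` is coassociative
      (∀ i j k : ℤ,
        (L.XIsoOfEq (show i + j + k = (i + j) + k by ring)).hom ≫ δn (i + j) k ≫
            (δn i j ▷ L.X k) =
          (L.XIsoOfEq (show i + j + k = i + (j + k) by ring)).hom ≫ δn i (j + k) ≫
            (L.X i ◁ δn j k) ≫ (α_ (L.X i) (L.X j) (L.X k)).inv) := by
  have hL : ∀ i j, n < i + j → IsZero (L.X i ⊗ L.X j) := fun _ _ h =>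
    ChainComplex.isZero_X_tensor_X (m := n + 1) (by omega) hzero (by omega)
  have hiso : ∀ i ≤ n, IsIso (q.f i) := fun i hi =>
    (ConcreteCategory.isIso_iff_bijective _).mpr (hbij i hi)
  have hepi : ∀ i, Epi (q.f i) := fun i => (ModuleCat.epi_iff_surjective _).mpr (hsurj i)
  have hsq := ChainComplex.f_comp_truncComul q δ n hiso hL
  exact ⟨_, hsq, fun _ _ h => ChainComplex.truncComul_eq_zero q δ n hiso (by omega),
    ChainComplex.IsChainComul.of_epi q hepi hsq hδchain,
    ChainComplex.IsCoassocComul.of_epi q hepi hsq hδcoassoc⟩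
end

section
/- Let R be a commutative ring, B a (non-counital) comonoid in chain complexes of R-modules with B_j = 0 for all j ≥ 0, and (M, δ) a right B-comodule with coaction δ : M → M ⊗ B. For any integer n, define δ_n : L_nM → L_nM ⊗ B by δ_n(x) = (q_n ⊗ id_B)(δ x) if |x| ≤ n and δ_n(x) = 0 if |x| ≥ n+1. Then δ_n is a well-defined coassociative right B-coaction on the truncation L_nM, and the quotient map q_n : M → L_nM is a map of right B-comodules. -/
/-!
The truncation map `q_n` is an isomorphism in degrees `≤ n`, so there `δ_n` is forced to be
`q_n⁻¹ ≫ δ ≫ (q_n ▷ B)`. In total degree `i + j ≥ n + 1` the target `L_i ⊗ B_j` vanishes: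
either `j ≥ 0` and `B_j = 0`, or `i ≥ n + 2` and `L_i = 0`. Hence the square
`q_n ≫ δ_n = δ ≫ (q_n ▷ B)` holds in every degree, and since `q_n` is degreewise
epimorphic, the chain-map and coassociativity identities of `δ` descend to `δ_n`.
-/

open CategoryTheory Limits MonoidalCategory

section Tensor

variable {C : Type*} [Category C] [Preadditive C] [MonoidalCategory C] [MonoidalPreadditive C]

lemma isZero_tensor_of_isZero_left {X : C} (h : IsZero X) (Y : C) : IsZero (X ⊗ Y) := by
  rw [IsZero.iff_id_eq_zero] at h ⊢
  rw [← id_whiskerRight, h, MonoidalPreadditive.zero_whiskerRight]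

lemma isZero_tensor_of_isZero_right (X : C) {Y : C} (h : IsZero Y) : IsZero (X ⊗ Y) := by
  rw [IsZero.iff_id_eq_zero] at h ⊢
  rw [← whiskerLeft_id, h, MonoidalPreadditive.whiskerLeft_zero]

end Tensor

namespace ChainComplex

variable {C : Type*} [Category C] [Preadditive C] [MonoidalCategory C]
variable {B M L : ChainComplex C ℤ}

def IsChainCoaction (δ : ∀ i j : ℤ, M.X (i + j) ⟶ M.X i ⊗ B.X j) : Prop :=
  ∀ i j : ℤ,
    M.d (i + 1 + j) (i + j) ≫ δ i j =
      (M.XIsoOfEq (show i + 1 + j = (i + 1) + j by ring)).hom ≫ δ (i + 1) j ≫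
          (M.d (i + 1) i ▷ B.X j) +
        (((-1 : ℤˣ) ^ i : ℤˣ) : ℤ) •
          ((M.XIsoOfEq (show i + 1 + j = i + (j + 1) by ring)).hom ≫ δ i (j + 1) ≫
            (M.X i ◁ B.d (j + 1) j))

def IsCoassocCoaction (δB : ∀ i j : ℤ, B.X (i + j) ⟶ B.X i ⊗ B.X j)
    (δ : ∀ i j : ℤ, M.X (i + j) ⟶ M.X i ⊗ B.X j) : Prop :=
  ∀ i j k : ℤ,
    (M.XIsoOfEq (show i + j + k = (i + j) + k by ring)).hom ≫ δ (i + j) k ≫ (δ i j ▷ B.X k) =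
      (M.XIsoOfEq (show i + j + k = i + (j + k) by ring)).hom ≫ δ i (j + k) ≫
        (M.X i ◁ δB j k) ≫ (α_ (M.X i) (B.X j) (B.X k)).inv

section Descent

variable (q : M ⟶ L)
variable {δ : ∀ i j : ℤ, M.X (i + j) ⟶ M.X i ⊗ B.X j}
variable {δL : ∀ i j : ℤ, L.X (i + j) ⟶ L.X i ⊗ B.X j}

lemma isChainCoaction_of_epi (hq : ∀ i, Epi (q.f i))
    (hsq : ∀ i j : ℤ, q.f (i + j) ≫ δL i j = δ i j ≫ (q.f i ▷ B.X j))
    (hδ : IsChainCoaction δ) : IsChainCoaction δL := by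
  intro i j
  have := hq (i + 1 + j)
  rw [← cancel_epi (q.f (i + 1 + j)), q.comm_assoc, hsq, reassoc_of% (hδ i j),
    Preadditive.add_comp, Preadditive.zsmul_comp, Preadditive.comp_add, Preadditive.comp_zsmul,
    HomologicalComplex.XIsoOfEq_hom_naturality_assoc, reassoc_of% (hsq (i + 1) j),
    HomologicalComplex.XIsoOfEq_hom_naturality_assoc, reassoc_of% (hsq i (j + 1))]
  simp only [Category.assoc, ← comp_whiskerRight, HomologicalComplex.Hom.comm, whisker_exchange]

lemma isCoassocCoaction_of_epi (hq : ∀ i, Epi (q.f i))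
    (δB : ∀ i j : ℤ, B.X (i + j) ⟶ B.X i ⊗ B.X j)
    (hsq : ∀ i j : ℤ, q.f (i + j) ≫ δL i j = δ i j ≫ (q.f i ▷ B.X j))
    (hδ : IsCoassocCoaction δB δ) : IsCoassocCoaction δB δL := by
  intro i j k
  have := hq (i + j + k)
  rw [← cancel_epi (q.f (i + j + k)), HomologicalComplex.XIsoOfEq_hom_naturality_assoc,
    HomologicalComplex.XIsoOfEq_hom_naturality_assoc, reassoc_of% (hsq (i + j) k),
    reassoc_of% (hsq i (j + k)), ← comp_whiskerRight, hsq i j, comp_whiskerRight,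
    ← whisker_exchange_assoc, associator_inv_naturality_left, reassoc_of% (hδ i j k)]

end Descent

section Truncation

variable (q : M ⟶ L) (n : ℤ) (hq : ∀ m ≤ n, IsIso (q.f m))
variable (δ : ∀ i j : ℤ, M.X (i + j) ⟶ M.X i ⊗ B.X j)

noncomputable def truncatedCoaction (i j : ℤ) : L.X (i + j) ⟶ L.X i ⊗ B.X j :=
  if h : i + j ≤ n then
    have := hq (i + j) h
    inv (q.f (i + j)) ≫ δ i j ≫ (q.f i ▷ B.X j)
  else 0

lemma truncatedCoaction_of_lt {i j : ℤ} (h : n < i + j) : truncatedCoaction q n hq δ i j = 0 :=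
  dif_neg (not_le.2 h)

lemma comp_truncatedCoaction (hL : ∀ i j : ℤ, n < i + j → IsZero (L.X i ⊗ B.X j)) (i j : ℤ) :
    q.f (i + j) ≫ truncatedCoaction q n hq δ i j = δ i j ≫ (q.f i ▷ B.X j) := by
  by_cases h : i + j ≤ n
  · have := hq (i + j) h
    simp only [truncatedCoaction, dif_pos h, IsIso.hom_inv_id_assoc]
  · exact (hL i j (not_le.1 h)).eq_of_tgt _ _

end Truncation

lemma isZero_tensor_of_lt [MonoidalPreadditive C] {n : ℤ} (hB : ∀ j : ℤ, 0 ≤ j → IsZero (B.X j))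
    (hL : ∀ i > n + 1, IsZero (L.X i)) (i j : ℤ) (h : n < i + j) : IsZero (L.X i ⊗ B.X j) := by
  by_cases hj : 0 ≤ j
  · exact isZero_tensor_of_isZero_right _ (hB j hj)
  · exact isZero_tensor_of_isZero_left (hL i (by omega)) _

end ChainComplex

theorem truncation_of_chain_comodule
    (R : Type) [CommRing R] (n : ℤ)
    (B M L : ChainComplex (ModuleCat R) ℤ)
    -- `B_j = 0` for `j ≥ 0`
    (hB : ∀ j : ℤ, 0 ≤ j → IsZero (B.X j))
    -- the components of the comultiplication of the comonoid `B`
    (δB : ∀ i j : ℤ, B.X (i + j) ⟶ B.X i ⊗ B.X j)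
    -- the truncation map `q_n : M ⟶ L_n M`
    (q : M ⟶ L)
    (hsurj : ∀ i : ℤ, Function.Surjective (q.f i))
    (hbij : ∀ i ≤ n, Function.Bijective (q.f i))
    (hzero : ∀ i > n + 1, IsZero (L.X i))
    -- the components of the coaction `δ : M ⟶ M ⊗ B`
    (δ : ∀ i j : ℤ, M.X (i + j) ⟶ M.X i ⊗ B.X j)
    -- `δ` is a chain map (Koszul sign rule)
    (hδchain : ∀ i j : ℤ,
      M.d (i + 1 + j) (i + j) ≫ δ i j =
        (M.XIsoOfEq (show i + 1 + j = (i + 1) + j by ring)).hom ≫ δ (i + 1) j ≫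
            (M.d (i + 1) i ▷ B.X j) +
          (((-1 : ℤˣ) ^ i : ℤˣ) : ℤ) •
            ((M.XIsoOfEq (show i + 1 + j = i + (j + 1) by ring)).hom ≫ δ i (j + 1) ≫
              (M.X i ◁ B.d (j + 1) j)))
    -- `δ` is coassociative over the comultiplication of `B`
    (hδcoassoc : ∀ i j k : ℤ,
      (M.XIsoOfEq (show i + j + k = (i + j) + k by ring)).hom ≫ δ (i + j) k ≫
          (δ i j ▷ B.X k) =
        (M.XIsoOfEq (show i + j + k = i + (j + k) by ring)).hom ≫ δ i (j + k) ≫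
          (M.X i ◁ δB j k) ≫ (α_ (M.X i) (B.X j) (B.X k)).inv) :
    -- Conclusion: the truncated coaction `δ_n` exists, is given by the formula of the
    -- paper, is a chain map, is coassociative, and the square says that
    -- `q_n` is a map of right `B`-comodules.
    ∃ δn : ∀ i j : ℤ, L.X (i + j) ⟶ L.X i ⊗ B.X j,
      -- the commuting square `q ≫ δ_n = δ ≫ (q ⊗ id_B)`
      (∀ i j : ℤ, q.f (i + j) ≫ δn i j = δ i j ≫ (q.f i ⊗ₘ 𝟙 (B.X j))) ∧
      -- `δ_n = 0` in total degrees `≥ n + 1`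
      (∀ i j : ℤ, n + 1 ≤ i + j → δn i j = 0) ∧
      -- `δ_n` is a chain map
      (∀ i j : ℤ,
        L.d (i + 1 + j) (i + j) ≫ δn i j =
          (L.XIsoOfEq (show i + 1 + j = (i + 1) + j by ring)).hom ≫ δn (i + 1) j ≫
              (L.d (i + 1) i ▷ B.X j) +
            (((-1 : ℤˣ) ^ i : ℤˣ) : ℤ) •
              ((L.XIsoOfEq (show i + 1 + j = i + (j + 1) by ring)).hom ≫ δn i (j + 1) ≫
                (L.X i ◁ B.d (j + 1) j))) ∧
      -- `δ_n` is coassociative over the comultiplication of `B`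
      (∀ i j k : ℤ,
        (L.XIsoOfEq (show i + j + k = (i + j) + k by ring)).hom ≫ δn (i + j) k ≫
            (δn i j ▷ B.X k) =
          (L.XIsoOfEq (show i + j + k = i + (j + k) by ring)).hom ≫ δn i (j + k) ≫
            (L.X i ◁ δB j k) ≫ (α_ (L.X i) (B.X j) (B.X k)).inv) := by
  have hiso : ∀ m ≤ n, IsIso (q.f m) := fun m h =>
    (ConcreteCategory.isIso_iff_bijective _).2 (hbij m h)
  have hepi : ∀ m, Epi (q.f m) := fun m => (ModuleCat.epi_iff_surjective _).2 (hsurj m)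
  have hsq := ChainComplex.comp_truncatedCoaction q n hiso δ
    (ChainComplex.isZero_tensor_of_lt hB hzero)
  refine ⟨ChainComplex.truncatedCoaction q n hiso δ, by simpa only [tensorHom_id] using hsq,
    fun i j h => ChainComplex.truncatedCoaction_of_lt q n hiso δ (by omega),
    ChainComplex.isChainCoaction_of_epi q hepi hsq hδchain,
    ChainComplex.isCoassocCoaction_of_epi q hepi δB hsq hδcoassoc⟩
end

section
/- Let (C, ⊗, 1) be a symmetric monoidal category and L an idempotent monoidal localization object, i.e., an object L1 equipped with a map l : 1 → L1 such that L1 ⊗ l : L1 → L1 ⊗ L1 is an isomorphism. If (X, δ) is a non-counital comonoid in C (δ : X → X ⊗ X coassociative), then L1 ⊗ X carries a coassociative comultiplication Δ defined as the composite L1 ⊗ X → L1 ⊗ X ⊗ X ≅ L1 ⊗ L1 ⊗ X ⊗ X ≅ (L1 ⊗ X) ⊗ (L1 ⊗ X) (using id ⊗ δ, the inverse of the idempotency isomorphism, and the symmetry), and the map l ⊗ X : X → L1 ⊗ X is a map of non-counital comonoids. -/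
/-!
STATEMENT 7: Let `(C, ⊗, 1)` be a symmetric monoidal category and `L1` an idempotent
monoidal localization object: `l : 1 ⟶ L1` such that `L1 ⊗ l : L1 ⟶ L1 ⊗ L1` is an
isomorphism.  If `(X, δ)` is a non-counital comonoid (`δ : X ⟶ X ⊗ X` coassociative),
then `L1 ⊗ X` carries a coassociative comultiplication `Δ` defined as the composite
`L1 ⊗ X → L1 ⊗ (X ⊗ X) → (L1 ⊗ L1) ⊗ (X ⊗ X) ≅ (L1 ⊗ X) ⊗ (L1 ⊗ X)`
(using `id ⊗ δ`, the idempotency isomorphism, and the symmetry), and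
`l ⊗ X : X → L1 ⊗ X` is a map of non-counital comonoids.
-/

open CategoryTheory MonoidalCategory

universe v u

variable {C : Type u} [Category.{v} C] [MonoidalCategory C] [SymmetricCategory C]

/-- The middle-four interchange isomorphism built from the associators and the symmetry. -/
noncomputable def middleFour (A B D E : C) : (A ⊗ B) ⊗ (D ⊗ E) ≅ (A ⊗ D) ⊗ (B ⊗ E) :=
  α_ A B (D ⊗ E) ≪≫
    whiskerLeftIso A ((α_ B D E).symm ≪≫ whiskerRightIso (β_ B D) E ≪≫ α_ D B E) ≪≫
    (α_ A D (B ⊗ E)).symm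

/-- The idempotency map `L1 ⊗ l : L1 ⟶ L1 ⊗ L1`. -/
noncomputable def idem (L1 : C) (l : 𝟙_ C ⟶ L1) : L1 ⟶ L1 ⊗ L1 :=
  (ρ_ L1).inv ≫ (L1 ◁ l)

/-- The localization map `l ⊗ X : X ⟶ L1 ⊗ X`. -/
noncomputable def locMap (L1 X : C) (l : 𝟙_ C ⟶ L1) : X ⟶ L1 ⊗ X :=
  (λ_ X).inv ≫ (l ▷ X)

/-- The comultiplication `Δ` on `L1 ⊗ X`, defined as in the paper:
`L1 ⊗ X → L1 ⊗ (X ⊗ X) → (L1 ⊗ L1) ⊗ (X ⊗ X) ≅ (L1 ⊗ X) ⊗ (L1 ⊗ X)`. -/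
noncomputable def smashComul (L1 X : C) (l : 𝟙_ C ⟶ L1) (δ : X ⟶ X ⊗ X) :
    L1 ⊗ X ⟶ (L1 ⊗ X) ⊗ (L1 ⊗ X) :=
  (L1 ◁ δ) ≫ (idem L1 l ▷ (X ⊗ X)) ≫ (middleFour L1 L1 X X).hom

/-!
The comultiplication `Δ` on `L1 ⊗ X` is the tensor product, through the interchange `tensorμ`,
of the comultiplications `L1 ⊗ l : L1 ⟶ L1 ⊗ L1` and `δ`. In a braided category the tensor
product of two coassociative comultiplications is coassociative, and `L1 ⊗ l` is coassociative
since both sides send `x` to `x ⊗ l ⊗ l`. The map `l ⊗ X` factors as `λ⁻¹ : X ⟶ 𝟙 ⊗ X` followed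
by `l ⊗ 𝟙`; the first is a map of comonoids by unitality of `tensorμ`, the second is a tensor
product of comonoid maps because `l ≫ (L1 ⊗ l) = l ⊗ l`.
-/

section CoassociativeComultiplications

variable {D : Type*} [Category D] [MonoidalCategory D]

def IsCoassoc {A : D} (c : A ⟶ A ⊗ A) : Prop :=
  c ≫ (c ▷ A) ≫ (α_ A A A).hom = c ≫ (A ◁ c)

theorem comp_idem (L1 : D) (l : 𝟙_ D ⟶ L1) : l ≫ idem L1 l = (λ_ (𝟙_ D)).inv ≫ (l ⊗ₘ l) := by
  rw [idem, rightUnitor_inv_naturality_assoc, ← MonoidalCategory.tensorHom_def, unitors_inv_equal]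

theorem isCoassoc_idem (L1 : D) (l : 𝟙_ D ⟶ L1) : IsCoassoc (idem L1 l) := by
  have l_whiskerRight : l ≫ (λ_ L1).inv ≫ (l ▷ L1) = l ≫ idem L1 l := by
    rw [comp_idem, leftUnitor_inv_naturality_assoc, ← tensorHom_def']
  rw [idem] at l_whiskerRight
  simp only [IsCoassoc, idem, comp_whiskerRight, Category.assoc,
    MonoidalCategory.whiskerLeft_comp]
  rw [associator_naturality_middle, triangle_assoc_comp_right_inv_assoc]
  simp only [← MonoidalCategory.whiskerLeft_comp]
  rw [l_whiskerRight]

variable [BraidedCategory D]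

noncomputable def tensorComul {A B : D} (a : A ⟶ A ⊗ A) (b : B ⟶ B ⊗ B) :
    A ⊗ B ⟶ (A ⊗ B) ⊗ (A ⊗ B) :=
  (a ⊗ₘ b) ≫ tensorμ A A B B

theorem IsCoassoc.tensorComul {A B : D} {a : A ⟶ A ⊗ A} {b : B ⟶ B ⊗ B}
    (ha : IsCoassoc a) (hb : IsCoassoc b) : IsCoassoc (tensorComul a b) := by
  have natural_left : tensorμ A A B B ≫ ((a ⊗ₘ b) ▷ (A ⊗ B)) =
      ((a ▷ A) ⊗ₘ (b ▷ B)) ≫ tensorμ (A ⊗ A) A (B ⊗ B) B := by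
    simpa using (tensorμ_natural a (𝟙 A) b (𝟙 B)).symm
  have natural_right : tensorμ A A B B ≫ ((A ⊗ B) ◁ (a ⊗ₘ b)) =
      ((A ◁ a) ⊗ₘ (B ◁ b)) ≫ tensorμ A (A ⊗ A) B (B ⊗ B) := by
    simpa using (tensorμ_natural (𝟙 A) a (𝟙 B) b).symm
  unfold IsCoassoc _root_.tensorComul
  calc ((a ⊗ₘ b) ≫ tensorμ A A B B) ≫ (((a ⊗ₘ b) ≫ tensorμ A A B B) ▷ (A ⊗ B)) ≫
        (α_ (A ⊗ B) (A ⊗ B) (A ⊗ B)).hom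
      = (a ⊗ₘ b) ≫ ((a ▷ A) ⊗ₘ (b ▷ B)) ≫ tensorμ (A ⊗ A) A (B ⊗ B) B ≫
          (tensorμ A A B B ▷ (A ⊗ B)) ≫ (α_ (A ⊗ B) (A ⊗ B) (A ⊗ B)).hom := by
        simp only [comp_whiskerRight, Category.assoc, reassoc_of% natural_left]
    _ = ((a ≫ (a ▷ A) ≫ (α_ A A A).hom) ⊗ₘ (b ≫ (b ▷ B) ≫ (α_ B B B).hom)) ≫
          tensorμ A (A ⊗ A) B (B ⊗ B) ≫ ((A ⊗ B) ◁ tensorμ A A B B) := by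
        rw [associator_monoidal]
        simp only [tensorHom_comp_tensorHom_assoc]
    _ = ((a ⊗ₘ b) ≫ tensorμ A A B B) ≫ ((A ⊗ B) ◁ ((a ⊗ₘ b) ≫ tensorμ A A B B)) := by
        rw [ha, hb, ← tensorHom_comp_tensorHom_assoc, ← reassoc_of% natural_right]
        simp only [MonoidalCategory.whiskerLeft_comp, Category.assoc]

theorem tensorHom_comp_tensorComul {A A' B B' : D} {a : A ⟶ A ⊗ A} {a' : A' ⟶ A' ⊗ A'}
    {b : B ⟶ B ⊗ B} {b' : B' ⟶ B' ⊗ B'} {f : A ⟶ A'} {g : B ⟶ B'}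
    (hf : f ≫ a' = a ≫ (f ⊗ₘ f)) (hg : g ≫ b' = b ≫ (g ⊗ₘ g)) :
    (f ⊗ₘ g) ≫ tensorComul a' b' = tensorComul a b ≫ ((f ⊗ₘ g) ⊗ₘ (f ⊗ₘ g)) := by
  rw [tensorComul, tensorComul, tensorHom_comp_tensorHom_assoc, hf, hg,
    ← tensorHom_comp_tensorHom_assoc, tensorμ_natural, Category.assoc]

theorem leftUnitor_inv_comp_tensorComul {X : D} (δ : X ⟶ X ⊗ X) :
    (λ_ X).inv ≫ tensorComul (λ_ (𝟙_ D)).inv δ = δ ≫ ((λ_ X).inv ⊗ₘ (λ_ X).inv) := by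
  have unitality : (λ_ (X ⊗ X)).inv ≫ ((λ_ (𝟙_ D)).inv ▷ (X ⊗ X)) ≫
      tensorμ (𝟙_ D) (𝟙_ D) X X = ((λ_ X).inv ⊗ₘ (λ_ X).inv) := by
    rw [← cancel_epi (λ_ (X ⊗ X)).hom, Iso.hom_inv_id_assoc, tensor_left_unitality]
    simp [tensorHom_comp_tensorHom]
  rw [tensorComul, tensorHom_def', Category.assoc, ← leftUnitor_inv_naturality_assoc, unitality]

end CoassociativeComultiplications

theorem smashComul_eq_tensorComul (L1 X : C) (l : 𝟙_ C ⟶ L1) (δ : X ⟶ X ⊗ X) :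
    smashComul L1 X l δ = tensorComul (idem L1 l) δ := by
  simp [smashComul, tensorComul, middleFour, tensorμ, tensorHom_def']

theorem smashing_localization_preserves_comonoids_general
    (L1 : C) (l : 𝟙_ C ⟶ L1)
    (X : C) (δ : X ⟶ X ⊗ X)
    -- coassociativity of `δ`
    (hδ : δ ≫ (δ ▷ X) ≫ (α_ X X X).hom = δ ≫ (X ◁ δ)) :
    -- `Δ` is coassociative, and `l ⊗ X` is a map of non-counital comonoids
    (smashComul L1 X l δ ≫ (smashComul L1 X l δ ▷ (L1 ⊗ X)) ≫
        (α_ (L1 ⊗ X) (L1 ⊗ X) (L1 ⊗ X)).hom =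
      smashComul L1 X l δ ≫ ((L1 ⊗ X) ◁ smashComul L1 X l δ)) ∧
    (locMap L1 X l ≫ smashComul L1 X l δ =
      δ ≫ (locMap L1 X l ⊗ₘ locMap L1 X l)) := by
  rw [smashComul_eq_tensorComul]
  refine ⟨(isCoassoc_idem L1 l).tensorComul hδ, ?_⟩
  have l_tensor_id : (l ⊗ₘ 𝟙 X) ≫ tensorComul (idem L1 l) δ =
      tensorComul (λ_ (𝟙_ C)).inv δ ≫ ((l ⊗ₘ 𝟙 X) ⊗ₘ (l ⊗ₘ 𝟙 X)) :=
    tensorHom_comp_tensorComul (comp_idem L1 l) (by simp)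
  rw [locMap, ← tensorHom_id, Category.assoc, l_tensor_id,
    reassoc_of% leftUnitor_inv_comp_tensorComul, tensorHom_comp_tensorHom]

theorem smashing_localization_preserves_comonoids
    (L1 : C) (l : 𝟙_ C ⟶ L1)
    -- idempotency: `L1 ⊗ l` is an isomorphism
    (hidem : IsIso (idem L1 l))
    (X : C) (δ : X ⟶ X ⊗ X)
    -- coassociativity of `δ`
    (hδ : δ ≫ (δ ▷ X) ≫ (α_ X X X).hom = δ ≫ (X ◁ δ)) :
    -- `Δ` is coassociative, and `l ⊗ X` is a map of non-counital comonoids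
    (smashComul L1 X l δ ≫ (smashComul L1 X l δ ▷ (L1 ⊗ X)) ≫
        (α_ (L1 ⊗ X) (L1 ⊗ X) (L1 ⊗ X)).hom =
      smashComul L1 X l δ ≫ ((L1 ⊗ X) ◁ smashComul L1 X l δ)) ∧
    (locMap L1 X l ≫ smashComul L1 X l δ =
      δ ≫ (locMap L1 X l ⊗ₘ locMap L1 X l)) :=
  smashing_localization_preserves_comonoids_general L1 l X δ hδ
end
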